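/- For the evolution U(t) constructed from the permutation Π = |4⟩⟨0|+|0⟩⟨2|+|2⟩⟨4|+|1⟩⟨3|+|3⟩⟨1| on ℂ⁵ with eigenbasis mixing parameters α, β and integer spectrum shifts, the transition amplitude from node 0 to a non-logical node is ⟨1|U(t)|0⟩ = ⟨3|U(t)|0⟩ = (βα*/√6)(e^{-2πi x₀^{(1)} t'} - e^{-2πi x₀^{(2)} t'}). In particular this amplitude vanishes for all t whenever α = 0, β = 0, or x₀^{(1)} = x₀^{(2)}. -/

import Mathlib

/-!
Expanding `⟨j|U(t)|0⟩` over the eigenbasis, only the two eigenvectors that mix `v₀⁽⁰⁾` and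
`v₁⁽⁰⁾` contribute for `j = 1, 3`: `v₁^(π)` vanishes at node `0` and the `v₀^(2πk/3)` vanish at
nodes `1` and `3`. The mixing `(α, β) ↦ (β*, -α*)` makes these two contributions equal to
`± βα* ⟨j|v₁⁽⁰⁾⟩⟨v₀⁽⁰⁾|0⟩` times their phases, and `⟨j|v₁⁽⁰⁾⟩⟨v₀⁽⁰⁾|0⟩ = 1/√6`.
-/

open Matrix ComplexConjugate

theorem Matrix.star_single_one_dotProduct_mulVec_single_one {n R : Type*} [Fintype n]
    [DecidableEq n] [CommSemiring R] [StarRing R] (A : Matrix n n R) (j k : n) :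
    star (Pi.single j 1 : n → R) ⬝ᵥ (A *ᵥ Pi.single k 1) = A j k := by
  rw [← Pi.single_star, star_one, single_one_dotProduct, mulVec_single_one, col_apply]

theorem Matrix.sum_smul_vecMulVec_star_apply {ι n R : Type*} [Fintype ι] [Semiring R] [StarRing R]
    (c : ι → R) (y : ι → n → R) (j k : n) :
    (∑ i, c i • vecMulVec (y i) (star (y i))) j k = ∑ i, c i * (y i j * star (y i k)) := by
  simp only [sum_apply, smul_apply, vecMulVec_apply, Pi.star_apply, smul_eq_mul]

theorem mixed_pair_amplitude {n : Type*} (α β c₀ c₁ : ℂ) (u w : n → ℂ) {j k : n}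
    (hu : u j = 0) (hw : w k = 0) :
    c₀ * ((α • u + β • w) j * conj ((α • u + β • w) k)) +
        c₁ * ((conj β • u - conj α • w) j * conj ((conj β • u - conj α • w) k)) =
      β * conj α * (w j * conj (u k)) * (c₀ - c₁) := by
  simp only [Pi.add_apply, Pi.sub_apply, Pi.smul_apply, smul_eq_mul, hu, hw, map_add, map_sub,
    map_mul, Complex.conj_conj, map_zero]
  ring

theorem star_single_dotProduct_spectral_sum_mulVec_single {n : Type*} [Fintype n]
    [DecidableEq n] (α β : ℂ) (u w a b d : n → ℂ) (c : Fin 5 → ℂ) {j k : n}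
    (hu : u j = 0) (hw : w k = 0) (ha : a k = 0) (hb : b j = 0) (hd : d j = 0) :
    star (Pi.single j 1 : n → ℂ) ⬝ᵥ
        ((∑ i, c i •
            vecMulVec (![α • u + β • w, conj β • u - conj α • w, a, b, d] i)
              (star (![α • u + β • w, conj β • u - conj α • w, a, b, d] i))) *ᵥ
          Pi.single k 1) =
      β * conj α * (w j * conj (u k)) * (c 0 - c 1) := by
  rw [star_single_one_dotProduct_mulVec_single_one, sum_smul_vecMulVec_star_apply,
    Fin.sum_univ_five]
  simp only [cons_val_zero, cons_val_one, cons_val_two, cons_val_three, cons_val_four,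
    head_cons, tail_cons, Complex.star_def, ha, hb, hd, map_zero, mul_zero, zero_mul, add_zero]
  exact mixed_pair_amplitude α β _ _ u w hu hw

theorem Complex.ofReal_one_div_sqrt_two_mul_conj_one_div_sqrt_three :
    ((1 / Real.sqrt 2 : ℝ) : ℂ) * conj ((1 / Real.sqrt 3 : ℝ) : ℂ) = 1 / Real.sqrt 6 := by
  rw [Complex.conj_ofReal, ← Complex.ofReal_mul, one_div_mul_one_div,
    ← Real.sqrt_mul (by norm_num)]
  norm_num

theorem stmt_15_general
    (e : Fin 5 → (Fin 5 → ℂ)) (he : ∀ k, e k = Pi.single k 1)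
    (α β : ℂ)
    (v00 v10 v1pi v0a v0b : Fin 5 → ℂ)
    (hv00 : v00 = ((1 / Real.sqrt 3 : ℝ) : ℂ) • (e 0 + e 2 + e 4))
    (hv10 : v10 = ((1 / Real.sqrt 2 : ℝ) : ℂ) • (e 1 + e 3))
    (hv1pi : v1pi = ((1 / Real.sqrt 2 : ℝ) : ℂ) • (e 1 - e 3))
    (hv0a : v0a = ((1 / Real.sqrt 3 : ℝ) : ℂ) •
      (e 0 + Complex.exp (2 * Real.pi * Complex.I / 3) • e 2 +
        Complex.exp (4 * Real.pi * Complex.I / 3) • e 4))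
    (hv0b : v0b = ((1 / Real.sqrt 3 : ℝ) : ℂ) •
      (e 0 + Complex.exp (4 * Real.pi * Complex.I / 3) • e 2 +
        Complex.exp (8 * Real.pi * Complex.I / 3) • e 4))
    (y : Fin 5 → (Fin 5 → ℂ))
    (hy : y = ![α • v00 + β • v10, (starRingEnd ℂ β) • v00 - (starRingEnd ℂ α) • v10,
      v1pi, v0a, v0b])
    (x01 x02 xpi xa xb : ℤ) (τ : ℝ)
    (ε : Fin 5 → ℝ)
    (hε : ε = ![2 * Real.pi * (x01 : ℝ), 2 * Real.pi * (x02 : ℝ),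
      -Real.pi + 2 * Real.pi * (xpi : ℝ),
      -(2 * Real.pi / 3) + 2 * Real.pi * (xa : ℝ),
      -(4 * Real.pi / 3) + 2 * Real.pi * (xb : ℝ)])
    (U : ℝ → Matrix (Fin 5) (Fin 5) ℂ)
    (hU : ∀ t : ℝ, U t = ∑ i : Fin 5,
      Complex.exp (-(Complex.I * ((ε i : ℂ)) * (t : ℂ) / (τ : ℂ))) •
        Matrix.vecMulVec (y i) (star (y i))) :
    (∀ t : ℝ,
      dotProduct (star (e 1)) ((U t).mulVec (e 0)) =
        dotProduct (star (e 3)) ((U t).mulVec (e 0)) ∧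
      dotProduct (star (e 1)) ((U t).mulVec (e 0)) =
        (β * (starRingEnd ℂ α) / (Real.sqrt 6 : ℂ)) *
          (Complex.exp (-(2 * Real.pi * Complex.I * (x01 : ℂ) * ((t / τ : ℝ) : ℂ))) -
           Complex.exp (-(2 * Real.pi * Complex.I * (x02 : ℂ) * ((t / τ : ℝ) : ℂ))))) ∧
    ((α = 0 ∨ β = 0 ∨ x01 = x02) → ∀ t : ℝ,
      dotProduct (star (e 1)) ((U t).mulVec (e 0)) = 0) := by
  have hamp : ∀ t, ∀ j, (j = 1 ∨ j = 3) → star (e j) ⬝ᵥ (U t *ᵥ e 0) =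
      β * conj α / (Real.sqrt 6 : ℂ) *
        (Complex.exp (-(2 * Real.pi * Complex.I * x01 * ((t / τ : ℝ) : ℂ))) -
          Complex.exp (-(2 * Real.pi * Complex.I * x02 * ((t / τ : ℝ) : ℂ)))) := by
    intro t j hj
    have hv00j : v00 j = 0 := by rcases hj with rfl | rfl <;> simp [hv00, he]
    have hv10j : v10 j = (1 / Real.sqrt 2 : ℝ) := by rcases hj with rfl | rfl <;> simp [hv10, he]
    have hv0aj : v0a j = 0 := by rcases hj with rfl | rfl <;> simp [hv0a, he]
    have hv0bj : v0b j = 0 := by rcases hj with rfl | rfl <;> simp [hv0b, he]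
    have hv00_0 : v00 0 = (1 / Real.sqrt 3 : ℝ) := by simp [hv00, he]
    have hv10_0 : v10 0 = 0 := by simp [hv10, he]
    have hv1pi_0 : v1pi 0 = 0 := by simp [hv1pi, he]
    rw [he, he, hU, hy, star_single_dotProduct_spectral_sum_mulVec_single α β v00 v10 v1pi v0a v0b
      _ hv00j hv10_0 hv1pi_0 hv0aj hv0bj, hv10j, hv00_0,
      Complex.ofReal_one_div_sqrt_two_mul_conj_one_div_sqrt_three, hε]
    simp only [cons_val_zero, cons_val_one]
    push_cast
    ring_nf
  refine ⟨fun t => ⟨(hamp t 1 (.inl rfl)).trans (hamp t 3 (.inr rfl)).symm,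
    hamp t 1 (.inl rfl)⟩, ?_⟩
  rintro (h | h | h) t <;> simp [hamp t 1 (.inl rfl), h]

/-- For the evolution `U(t)` constructed from the permutation
`P = |4⟩⟨0|+|0⟩⟨2|+|2⟩⟨4|+|1⟩⟨3|+|3⟩⟨1|` on `ℂ⁵` with eigenbasis mixing parameters `α, β`
and integer spectrum shifts, the transition amplitude from node `0` to a non-logical node is
`⟨1|U(t)|0⟩ = ⟨3|U(t)|0⟩ = (βα*/√6)(e^{-2πi x₀⁽¹⁾ t'} - e^{-2πi x₀⁽²⁾ t'})`; in particular
this amplitude vanishes for all `t` whenever `α = 0`, `β = 0`, or `x₀⁽¹⁾ = x₀⁽²⁾`. -/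
theorem stmt_15
    (e : Fin 5 → (Fin 5 → ℂ)) (he : ∀ k, e k = Pi.single k 1)
    (α β : ℂ) (hαβ : ‖α‖ ^ 2 + ‖β‖ ^ 2 = 1)
    (v00 v10 v1pi v0a v0b : Fin 5 → ℂ)
    (hv00 : v00 = ((1 / Real.sqrt 3 : ℝ) : ℂ) • (e 0 + e 2 + e 4))
    (hv10 : v10 = ((1 / Real.sqrt 2 : ℝ) : ℂ) • (e 1 + e 3))
    (hv1pi : v1pi = ((1 / Real.sqrt 2 : ℝ) : ℂ) • (e 1 - e 3))
    (hv0a : v0a = ((1 / Real.sqrt 3 : ℝ) : ℂ) •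
      (e 0 + Complex.exp (2 * Real.pi * Complex.I / 3) • e 2 +
        Complex.exp (4 * Real.pi * Complex.I / 3) • e 4))
    (hv0b : v0b = ((1 / Real.sqrt 3 : ℝ) : ℂ) •
      (e 0 + Complex.exp (4 * Real.pi * Complex.I / 3) • e 2 +
        Complex.exp (8 * Real.pi * Complex.I / 3) • e 4))
    (y : Fin 5 → (Fin 5 → ℂ))
    (hy : y = ![α • v00 + β • v10, (starRingEnd ℂ β) • v00 - (starRingEnd ℂ α) • v10,
      v1pi, v0a, v0b])
    (x01 x02 xpi xa xb : ℤ) (τ : ℝ) (hτ : 0 < τ)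
    (ε : Fin 5 → ℝ)
    (hε : ε = ![2 * Real.pi * (x01 : ℝ), 2 * Real.pi * (x02 : ℝ),
      -Real.pi + 2 * Real.pi * (xpi : ℝ),
      -(2 * Real.pi / 3) + 2 * Real.pi * (xa : ℝ),
      -(4 * Real.pi / 3) + 2 * Real.pi * (xb : ℝ)])
    (U : ℝ → Matrix (Fin 5) (Fin 5) ℂ)
    (hU : ∀ t : ℝ, U t = ∑ i : Fin 5,
      Complex.exp (-(Complex.I * ((ε i : ℂ)) * (t : ℂ) / (τ : ℂ))) •
        Matrix.vecMulVec (y i) (star (y i))) :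
    (∀ t : ℝ,
      dotProduct (star (e 1)) ((U t).mulVec (e 0)) =
        dotProduct (star (e 3)) ((U t).mulVec (e 0)) ∧
      dotProduct (star (e 1)) ((U t).mulVec (e 0)) =
        (β * (starRingEnd ℂ α) / (Real.sqrt 6 : ℂ)) *
          (Complex.exp (-(2 * Real.pi * Complex.I * (x01 : ℂ) * ((t / τ : ℝ) : ℂ))) -
           Complex.exp (-(2 * Real.pi * Complex.I * (x02 : ℂ) * ((t / τ : ℝ) : ℂ))))) ∧
    ((α = 0 ∨ β = 0 ∨ x01 = x02) → ∀ t : ℝ,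
      dotProduct (star (e 1)) ((U t).mulVec (e 0)) = 0) :=
  stmt_15_general e he α β v00 v10 v1pi v0a v0b hv00 hv10 hv1pi hv0a hv0b y hy x01 x02 xpi xa xb τ ε
    hε U hU
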